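/- arXiv:1908.03802 — 3 statements merged into one kernel-verified Lean document; each statement's English description precedes it below -/
import Mathlib

section
/- (Outer radius, Theorem 2.) Assume the framework setup and suppose D < 1/2. Define η₂ = L·(√(μ̄+4) − √μ̄)/2 − η₁ if D < 1/4 + (1/8)(√μ̄·√(μ̄+4) − μ̄), and η₂ = L·(√(μ̄+2) − √μ̄)/2 otherwise. Then η₂ > η₁, and every configuration q ∈ 𝒞^p with the same edge lengths as p (i.e. |q_i − q_j| = |p_i − p_j| for every edge (i,j) ∈ E) and with |q − p| > η₁ satisfies |q − p| ≥ η₂. -/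
noncomputable section
open scoped BigOperators InnerProductSpace Classical

/-- Configuration space of `n` points in `ℝ^d`, with the Euclidean norm on `ℝ^{dn}`. -/
abbrev Config (n d : ℕ) := PiLp 2 (fun _ : Fin n => EuclideanSpace ℝ (Fin d))

/-- The rigidity operator `R(q)` applied to `u`: the `k`-th entry, for edge `k = (i,j)`,
is `⟨q_i - q_j, u_i - u_j⟩`. -/
def rig {n d m : ℕ} (E : Fin m → Fin n × Fin n) (q u : Config n d) :
    EuclideanSpace ℝ (Fin m) :=
  WithLp.toLp 2 (fun k => ⟪q (E k).1 - q (E k).2, u (E k).1 - u (E k).2⟫_ℝ)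

/-- The stress form `Ω_ω(v) = Σ_{(i,j)∈E} ω_{ij} |v_i - v_j|²`. -/
def stressForm {n d m : ℕ} (E : Fin m → Fin n × Fin n)
    (ω : EuclideanSpace ℝ (Fin m)) (v : Config n d) : ℝ :=
  ∑ k, ω k * ‖v (E k).1 - v (E k).2‖ ^ 2

/-- The vector `ωᵀ R(p) ∈ ℝ^{dn}` whose `l`-th block is `Σ_{j : (l,j)∈E} ω_{lj} (p_l - p_j)`. -/
def stressGrad {n d m : ℕ} (E : Fin m → Fin n × Fin n)
    (ω : EuclideanSpace ℝ (Fin m)) (p : Config n d) : Config n d :=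
  WithLp.toLp 2 (fun l => ∑ k, (((if (E k).1 = l then (1:ℝ) else 0) - (if (E k).2 = l then (1:ℝ) else 0)) * ω k) •
    (p (E k).1 - p (E k).2))

/-- The vector `e(q) ∈ ℝ^m` of squared edge lengths. -/
def esq {n d m : ℕ} (E : Fin m → Fin n × Fin n) (q : Config n d) :
    EuclideanSpace ℝ (Fin m) :=
  WithLp.toLp 2 (fun k => ‖q (E k).1 - q (E k).2‖ ^ 2)

/-- `z` bounds the number of edges incident to each vertex (`z ≥` the maximum adjacency). -/
def degBound {n m : ℕ} (E : Fin m → Fin n × Fin n) (z : ℝ) : Prop :=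
  ∀ l : Fin n, ((Finset.univ.filter (fun k => (E k).1 = l ∨ (E k).2 = l)).card : ℝ) ≤ z

/-!
Write `v = q - p` and `t = ‖v‖`. Since `q` has the edge lengths of `p`, expanding
`|q_i - q_j|² = |p_i - p_j|²` gives `R(p) v = -½ e(v)`, where `e(v)` is the vector of squared
edge lengths of `v`. Hence `|R(p) v|² ≤ z t⁴`, and `Ω_ω(v) = ⟨ω, e(v)⟩ = -2 ⟨ωᵀR(p), v⟩` is at
most `λ η₁ t / 2`. Fed into the framework inequality (extended from unit vectors by homogeneity)
these give `t² ≤ t⁴ / (4L²) + η₁ t / 2`, which fails as soon as `η₁ < t` and `2t² ≤ L²`. Both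
branches of `η₂` satisfy `η₁ < η₂` and `2η₂² ≤ L²`: the hypothesis on `D` says that `η₁ / L` lies
below the positive root of `x (√μ̄ + x) = c` for the corresponding threshold `c`.
-/

lemma lt_of_mul_add_self_lt {s r x : ℝ} (hs : 0 ≤ s) (hr : 0 ≤ r) (hx : 0 ≤ x)
    (h : x * (s + x) < r * (s + r)) : x < r := by
  by_contra! hle
  nlinarith [mul_nonneg (sub_nonneg.2 hle) (by positivity : 0 ≤ s + x + r)]

lemma outer_radius_bounds_of_lt_threshold {L η₁ μ : ℝ} (hL : 0 < L) (hη₁ : 0 ≤ η₁)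
    (hμ : 1 / 2 ≤ μ)
    (hD : η₁ / L * (√μ + η₁ / L) < 1 / 4 + 1 / 8 * (√μ * √(μ + 4) - μ)) :
    η₁ < L * (√(μ + 4) - √μ) / 2 - η₁ ∧ 2 * (L * (√(μ + 4) - √μ) / 2 - η₁) ^ 2 ≤ L ^ 2 := by
  set s := √μ
  set u := √(μ + 4)
  have hs : 0 ≤ s := Real.sqrt_nonneg _
  have hs2 : s ^ 2 = μ := Real.sq_sqrt (by linarith)
  have hu2 : u ^ 2 = μ + 4 := Real.sq_sqrt (by linarith)
  have hsu : s ≤ u := Real.sqrt_le_sqrt (by linarith)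
  -- `(u - s) / 4` is the positive root of `x (s + x) = 1/4 + (s u - s²)/8`
  have hx : η₁ / L < (u - s) / 4 :=
    lt_of_mul_add_self_lt hs (by linarith) (div_nonneg hη₁ hL.le) (by nlinarith)
  have hη₁L : η₁ < L * (u - s) / 4 := by rwa [div_lt_iff₀ hL, div_mul_eq_mul_div, mul_comm] at hx
  have hus : (u - s) ^ 2 ≤ 2 := by
    nlinarith [sq_nonneg (u * s - s ^ 2 - 1), mul_nonneg hs (hs.trans hsu)]
  refine ⟨by linarith, ?_⟩
  nlinarith [mul_nonneg hL.le (sub_nonneg.2 hsu)]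

lemma outer_radius_bounds_of_lt_half {L η₁ μ : ℝ} (hL : 0 < L) (hη₁ : 0 ≤ η₁) (hμ : 0 ≤ μ)
    (hD : η₁ / L * (√μ + η₁ / L) < 1 / 2) :
    η₁ < L * (√(μ + 2) - √μ) / 2 ∧ 2 * (L * (√(μ + 2) - √μ) / 2) ^ 2 ≤ L ^ 2 := by
  set s := √μ
  set w := √(μ + 2)
  have hs : 0 ≤ s := Real.sqrt_nonneg _
  have hs2 : s ^ 2 = μ := Real.sq_sqrt hμ
  have hw2 : w ^ 2 = μ + 2 := Real.sq_sqrt (by linarith)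
  have hsw : s ≤ w := Real.sqrt_le_sqrt (by linarith)
  have hx : η₁ / L < (w - s) / 2 :=
    lt_of_mul_add_self_lt hs (by linarith) (div_nonneg hη₁ hL.le) (by nlinarith)
  have hws : (w - s) ^ 2 ≤ 2 := by nlinarith [mul_le_mul_of_nonneg_left hsw hs]
  refine ⟨by rwa [div_lt_iff₀ hL, div_mul_eq_mul_div, mul_comm] at hx, ?_⟩
  nlinarith

lemma quartic_lt_sq {L η₁ t : ℝ} (hη₁ : 0 ≤ η₁) (ht : η₁ < t) (htL : 2 * t ^ 2 ≤ L ^ 2) :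
    t ^ 4 / (4 * L ^ 2) + η₁ * t / 2 < t ^ 2 := by
  have ht0 : 0 < t := hη₁.trans_lt ht
  have hL : 0 < L ^ 2 := by nlinarith
  rw [div_add_div _ _ (by positivity) two_ne_zero, div_lt_iff₀ (by positivity)]
  nlinarith [mul_pos ht0 (sub_pos.2 ht), mul_pos ht0 hL]

section Framework

variable {n d m : ℕ} (E : Fin m → Fin n × Fin n)

lemma norm_sub_sq_le_two_mul_sum_filter (v : Config n d) (i j : Fin n) :
    ‖v i - v j‖ ^ 2 ≤ 2 * ∑ l ∈ Finset.univ.filter (fun l => i = l ∨ j = l), ‖v l‖ ^ 2 := by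
  rcases eq_or_ne i j with rfl | hij
  · rw [sub_self, norm_zero, sq, zero_mul]
    positivity
  · have hpair : Finset.univ.filter (fun l => i = l ∨ j = l) = {i, j} := by
      ext l; simp [eq_comm]
    rw [hpair, Finset.sum_pair hij]
    nlinarith [norm_sub_le (v i) (v j), sq_nonneg (‖v i‖ - ‖v j‖), norm_nonneg (v i - v j)]

lemma norm_sub_sq_le_two_mul_norm_sq (v : Config n d) (i j : Fin n) :
    ‖v i - v j‖ ^ 2 ≤ 2 * ‖v‖ ^ 2 := by
  rw [PiLp.norm_sq_eq_of_L2 _ v]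
  exact (norm_sub_sq_le_two_mul_sum_filter v i j).trans
    (mul_le_mul_of_nonneg_left (Finset.sum_le_univ_sum_of_nonneg fun _ => by positivity)
      zero_le_two)

lemma sum_norm_edge_sq_le {z : ℝ} (hdeg : degBound E z) (v : Config n d) :
    ∑ k, ‖v (E k).1 - v (E k).2‖ ^ 2 ≤ 2 * z * ‖v‖ ^ 2 := by
  calc ∑ k, ‖v (E k).1 - v (E k).2‖ ^ 2
      ≤ ∑ k, 2 * ∑ l ∈ Finset.univ.filter (fun l => (E k).1 = l ∨ (E k).2 = l), ‖v l‖ ^ 2 :=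
        Finset.sum_le_sum fun k _ => norm_sub_sq_le_two_mul_sum_filter v _ _
    _ = 2 * ∑ l, (Finset.univ.filter (fun k => (E k).1 = l ∨ (E k).2 = l)).card * ‖v l‖ ^ 2 := by
        simp only [← Finset.mul_sum, Finset.sum_filter]
        rw [Finset.sum_comm]
        simp only [← Finset.sum_filter, Finset.sum_const, nsmul_eq_mul]
    _ ≤ 2 * ∑ l, z * ‖v l‖ ^ 2 := by gcongr with l; exact hdeg l
    _ = 2 * z * ‖v‖ ^ 2 := by rw [PiLp.norm_sq_eq_of_L2 _ v, ← Finset.mul_sum, mul_assoc]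

lemma norm_esq_sq_le {z : ℝ} (hdeg : degBound E z) (v : Config n d) :
    ‖esq E v‖ ^ 2 ≤ 4 * z * ‖v‖ ^ 4 := by
  rw [EuclideanSpace.norm_sq_eq]
  calc ∑ k, ‖esq E v k‖ ^ 2
      = ∑ k, ‖v (E k).1 - v (E k).2‖ ^ 2 * ‖v (E k).1 - v (E k).2‖ ^ 2 := by
        simp only [esq, PiLp.toLp_apply, Real.norm_eq_abs, sq_abs, ← sq]
    _ ≤ ∑ k, 2 * ‖v‖ ^ 2 * ‖v (E k).1 - v (E k).2‖ ^ 2 := by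
        gcongr; exact norm_sub_sq_le_two_mul_norm_sq v _ _
    _ ≤ 2 * ‖v‖ ^ 2 * (2 * z * ‖v‖ ^ 2) := by
        rw [← Finset.mul_sum]; gcongr; exact sum_norm_edge_sq_le E hdeg v
    _ = 4 * z * ‖v‖ ^ 4 := by ring

lemma rig_sub_eq_neg_half_smul_esq {p q : Config n d}
    (hlen : ∀ k, ‖q (E k).1 - q (E k).2‖ = ‖p (E k).1 - p (E k).2‖) :
    rig E p (q - p) = -(1 / 2 : ℝ) • esq E (q - p) := by
  ext k
  have hq : q (E k).1 - q (E k).2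
      = (p (E k).1 - p (E k).2) + ((q - p) (E k).1 - (q - p) (E k).2) := by
    simp only [PiLp.sub_apply]; abel
  have h := norm_add_sq_real (p (E k).1 - p (E k).2) ((q - p) (E k).1 - (q - p) (E k).2)
  rw [← hq, hlen k] at h
  simp only [rig, esq, PiLp.toLp_apply, PiLp.smul_apply, smul_eq_mul]
  linarith

lemma inner_stressGrad (ω : EuclideanSpace ℝ (Fin m)) (p v : Config n d) :
    ⟪stressGrad E ω p, v⟫_ℝ = ⟪ω, rig E p v⟫_ℝ := by
  rw [PiLp.inner_apply, PiLp.inner_apply]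
  simp only [stressGrad, rig, PiLp.toLp_apply, sum_inner, real_inner_smul_left]
  rw [Finset.sum_comm]
  refine Finset.sum_congr rfl fun k _ => ?_
  simp only [sub_mul, ite_mul, one_mul, zero_mul, Finset.sum_sub_distrib, Finset.sum_ite_eq,
    Finset.mem_univ, if_true, inner_sub_right, Real.inner_apply]

lemma stressForm_eq_inner_esq (ω : EuclideanSpace ℝ (Fin m)) (v : Config n d) :
    stressForm E ω v = ⟪ω, esq E v⟫_ℝ := by
  simp only [stressForm, esq, PiLp.inner_apply, Real.inner_apply]

lemma rig_smul (p v : Config n d) (c : ℝ) : rig E p (c • v) = c • rig E p v := by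
  ext k
  simp only [rig, PiLp.toLp_apply, PiLp.smul_apply, ← smul_sub, real_inner_smul_right,
    smul_eq_mul]

lemma stressForm_smul (ω : EuclideanSpace ℝ (Fin m)) (v : Config n d) (c : ℝ) :
    stressForm E ω (c • v) = c ^ 2 * stressForm E ω v := by
  simp only [stressForm, PiLp.smul_apply, ← smul_sub, norm_smul, Real.norm_eq_abs, mul_pow,
    sq_abs, Finset.mul_sum]
  exact Finset.sum_congr rfl fun k _ => by ring

-- both sides are homogeneous of degree 2, so the bound on unit vectors extends to all of `C`
lemma mul_norm_sq_le_of_mem {p : Config n d} {C : Submodule ℝ (Config n d)} {κ lam : ℝ}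
    {ω : EuclideanSpace ℝ (Fin m)}
    (hlower : ∀ v ∈ C, ‖v‖ = 1 → lam ≤ 2 * κ * ‖rig E p v‖ ^ 2 + stressForm E ω v)
    {v : Config n d} (hv : v ∈ C) :
    lam * ‖v‖ ^ 2 ≤ 2 * κ * ‖rig E p v‖ ^ 2 + stressForm E ω v := by
  rcases eq_or_ne v 0 with rfl | hv0
  · have hrig : rig E p 0 = 0 := by simpa using rig_smul E p 0 0
    simp [hrig, stressForm]
  have hunit := hlower (‖v‖⁻¹ • v) (C.smul_mem _ hv) (norm_smul_inv_norm hv0)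
  rw [rig_smul, stressForm_smul, norm_smul, Real.norm_eq_abs, abs_inv, abs_norm] at hunit
  have hpos : 0 < ‖v‖ := norm_pos_iff.2 hv0
  calc lam * ‖v‖ ^ 2
      ≤ (2 * κ * (‖v‖⁻¹ * ‖rig E p v‖) ^ 2 + ‖v‖⁻¹ ^ 2 * stressForm E ω v) * ‖v‖ ^ 2 :=
        mul_le_mul_of_nonneg_right hunit (by positivity)
    _ = 2 * κ * ‖rig E p v‖ ^ 2 + stressForm E ω v := by field_simp

lemma mul_norm_sub_sq_le_of_edge_lengths_eq {p q : Config n d} {C : Submodule ℝ (Config n d)}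
    {z κ lam : ℝ} {ω : EuclideanSpace ℝ (Fin m)} (hκ : 0 ≤ κ) (hdeg : degBound E z)
    (hlower : ∀ v ∈ C, ‖v‖ = 1 → lam ≤ 2 * κ * ‖rig E p v‖ ^ 2 + stressForm E ω v)
    (hqC : q - p ∈ C) (hlen : ∀ k, ‖q (E k).1 - q (E k).2‖ = ‖p (E k).1 - p (E k).2‖) :
    lam * ‖q - p‖ ^ 2 ≤ 2 * κ * z * ‖q - p‖ ^ 4 + 2 * ‖stressGrad E ω p‖ * ‖q - p‖ := by
  have hrig := rig_sub_eq_neg_half_smul_esq E hlen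
  have hR : ‖rig E p (q - p)‖ ^ 2 ≤ z * ‖q - p‖ ^ 4 := by
    rw [hrig, norm_smul, mul_pow, show ‖(-(1 / 2) : ℝ)‖ ^ 2 = 1 / 4 by norm_num]
    linarith [norm_esq_sq_le E hdeg (q - p)]
  have hΩ : stressForm E ω (q - p) ≤ 2 * ‖stressGrad E ω p‖ * ‖q - p‖ := by
    have hΩeq : stressForm E ω (q - p) = -2 * ⟪stressGrad E ω p, q - p⟫_ℝ := by
      rw [stressForm_eq_inner_esq, inner_stressGrad, hrig, real_inner_smul_right]
      ring
    rw [hΩeq]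
    linarith [neg_abs_le ⟪stressGrad E ω p, q - p⟫_ℝ,
      abs_real_inner_le_norm (stressGrad E ω p) (q - p)]
  calc lam * ‖q - p‖ ^ 2 ≤ 2 * κ * ‖rig E p (q - p)‖ ^ 2 + stressForm E ω (q - p) :=
        mul_norm_sq_le_of_mem E hlower hqC
    _ ≤ 2 * κ * (z * ‖q - p‖ ^ 4) + 2 * ‖stressGrad E ω p‖ * ‖q - p‖ := by gcongr
    _ = 2 * κ * z * ‖q - p‖ ^ 4 + 2 * ‖stressGrad E ω p‖ * ‖q - p‖ := by ring

end Framework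

theorem outer_radius_general {n d m : ℕ} (E : Fin m → Fin n × Fin n)
    (p : Config n d) (C : Submodule ℝ (Config n d))
    (z κ lam μ₀ : ℝ) (ω : EuclideanSpace ℝ (Fin m))
    (hz : 1 ≤ z) (hdeg : degBound E z)
    (hκ : 0 < κ) (hlam : 0 < lam) (hμ₀ : μ₀ ≤ lam / 2)
    (hlower : ∀ v ∈ C, ‖v‖ = 1 → lam ≤ 2 * κ * ‖rig E p v‖ ^ 2 + stressForm E ω v)
    (L μbar η₁ D η₂ : ℝ)
    (hL : L = Real.sqrt (lam / (8 * z * κ)))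
    (hμbar : μbar = 1 - μ₀ / lam)
    (hη₁ : η₁ = 4 * ‖stressGrad E ω p‖ / lam)
    (hD : D = (η₁ / L) * (Real.sqrt μbar + η₁ / L))
    (hDlt : D < 1 / 2)
    (hη₂ : η₂ =
      if D < 1 / 4 + (1 / 8) * (Real.sqrt μbar * Real.sqrt (μbar + 4) - μbar) then
        L * (Real.sqrt (μbar + 4) - Real.sqrt μbar) / 2 - η₁
      else
        L * (Real.sqrt (μbar + 2) - Real.sqrt μbar) / 2) :
    η₁ < η₂ ∧
      ∀ q : Config n d, q - p ∈ C →
        (∀ k, ‖q (E k).1 - q (E k).2‖ = ‖p (E k).1 - p (E k).2‖) →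
        η₁ < ‖q - p‖ → η₂ ≤ ‖q - p‖ := by
  have hz0 : 0 < z := by linarith
  have hL0 : 0 < L := hL ▸ Real.sqrt_pos.2 (by positivity)
  have hκz : 2 * κ * z = lam / (4 * L ^ 2) := by
    rw [hL, Real.sq_sqrt (by positivity)]
    field_simp
    ring
  have hgrad : 2 * ‖stressGrad E ω p‖ = lam * η₁ / 2 := by
    rw [hη₁]
    field_simp
    ring
  have hη₁0 : 0 ≤ η₁ := hη₁ ▸ by positivity
  have hμbar0 : 1 / 2 ≤ μbar := by
    have : μ₀ / lam ≤ 1 / 2 := by rw [div_le_iff₀ hlam]; linarith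
    linarith
  have hη₂_bounds : η₁ < η₂ ∧ 2 * η₂ ^ 2 ≤ L ^ 2 := by
    subst hη₂ hD
    split_ifs with hc
    · exact outer_radius_bounds_of_lt_threshold hL0 hη₁0 hμbar0 hc
    · exact outer_radius_bounds_of_lt_half hL0 hη₁0 (by linarith) hDlt
  refine ⟨hη₂_bounds.1, fun q hqC hlen hfar => ?_⟩
  by_contra! hnear
  have hbound := mul_norm_sub_sq_le_of_edge_lengths_eq E hκ.le hdeg hlower hqC hlen
  rw [hκz, hgrad] at hbound
  have hlt := quartic_lt_sq (L := L) hη₁0 hfar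
    (by linarith [hη₂_bounds.2, pow_lt_pow_left₀ hnear (norm_nonneg _) two_ne_zero])
  have hfactor : lam / (4 * L ^ 2) * ‖q - p‖ ^ 4 + lam * η₁ / 2 * ‖q - p‖
      = lam * (‖q - p‖ ^ 4 / (4 * L ^ 2) + η₁ * ‖q - p‖ / 2) := by ring
  linarith [mul_lt_mul_of_pos_left hlt hlam]

/-- **Theorem 2 (Outer radius).** Under the framework setup with `D < 1/2`, the radius `η₂`
(defined piecewise) satisfies `η₂ > η₁`, and any configuration in `𝒞^p` with the same edge
lengths as `p` lying outside the `η₁`-ball lies outside the `η₂`-ball. -/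
theorem outer_radius {n d m : ℕ} (E : Fin m → Fin n × Fin n) (hm : 0 < m)
    (hE : ∀ k, (E k).1 ≠ (E k).2)
    (p : Config n d) (C : Submodule ℝ (Config n d))
    (z κ lam μ₀ : ℝ) (ω : EuclideanSpace ℝ (Fin m))
    (hz : 1 ≤ z) (hdeg : degBound E z)
    (hκ : 0 < κ) (hlam : 0 < lam) (hμ₀ : μ₀ ≤ lam / 2)
    (hlower : ∀ v ∈ C, ‖v‖ = 1 → lam ≤ 2 * κ * ‖rig E p v‖ ^ 2 + stressForm E ω v)
    (hμlower : ∀ v ∈ C, ‖v‖ = 1 → μ₀ ≤ stressForm E ω v)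
    (L μbar η₁ D η₂ : ℝ)
    (hL : L = Real.sqrt (lam / (8 * z * κ)))
    (hμbar : μbar = 1 - μ₀ / lam)
    (hη₁ : η₁ = 4 * ‖stressGrad E ω p‖ / lam)
    (hD : D = (η₁ / L) * (Real.sqrt μbar + η₁ / L))
    (hDlt : D < 1 / 2)
    (hη₂ : η₂ =
      if D < 1 / 4 + (1 / 8) * (Real.sqrt μbar * Real.sqrt (μbar + 4) - μbar) then
        L * (Real.sqrt (μbar + 4) - Real.sqrt μbar) / 2 - η₁
      else
        L * (Real.sqrt (μbar + 2) - Real.sqrt μbar) / 2) :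
    η₁ < η₂ ∧
      ∀ q : Config n d, q - p ∈ C →
        (∀ k, ‖q (E k).1 - q (E k).2‖ = ‖p (E k).1 - p (E k).2‖) →
        η₁ < ‖q - p‖ → η₂ ≤ ‖q - p‖ :=
  outer_radius_general E p C z κ lam μ₀ ω hz hdeg hκ hlam hμ₀ hlower L μbar η₁ D η₂ hL hμbar hη₁ hD
    hDlt hη₂
end
end

section
/- (Energy barrier near an almost-critical point, Proposition 3.) Assume the C³ setting. Suppose η₃ > (3/2)η₁* is a real number such that 3ā(v,η₃)·η₃ ≤ 2b(v) for every unit vector v. Then every q ∈ ℝⁿ with (3/2)η₁* < |q − p| ≤ η₃ satisfies H(q) − H(p) ≥ (λ/3)|q − p|²(1 − (3/2)η₁*/|q − p|) > 0. Moreover, if the strong discriminant condition (max over unit v of |c(v)|/b(v)) · (max over unit v of ā(v,(3/2)η₁*)/b(v)) < 2/9 holds, then such a number η₃ > (3/2)η₁* exists. -/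
noncomputable section

/-- The `k`-th directional derivative `H^{(k)}|_q(v) = (d/dt)^k H(q + t v)` at `t = 0`. -/
def dirDeriv {E : Type*} [NormedAddCommGroup E] [NormedSpace ℝ E]
    (H : E → ℝ) (k : ℕ) (q v : E) : ℝ :=
  iteratedDeriv k (fun t : ℝ => H (q + t • v)) 0

/-- `ā(v,r) = max_{|s| ≤ r} (1/6)|H'''|_{p+sv}(v)|`. -/
def thirdDerivMax {E : Type*} [NormedAddCommGroup E] [NormedSpace ℝ E]
    (H : E → ℝ) (p : E) (v : E) (r : ℝ) : ℝ :=
  sSup ((fun s : ℝ => (1 / 6) * |dirDeriv H 3 (p + s • v) v|) '' Set.Icc (-r) r)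

/-!
Along the ray `t ↦ p + t v` with `v` a unit vector, Taylor's formula with Lagrange remainder gives
`H(p + r v) - H(p) ≥ c(v) r + b(v) r² - ā(v, η₃) r³`. The barrier hypothesis bounds the cubic term
by `(2/3) b(v) r²`, the definition of `η₁*` bounds `|c(v)|` by `(η₁*/2) b(v)`, and `b(v) ≥ λ`.

For the existence of `η₃`, put `A = (3/2) η₁*` and let `C₁, C₂` be the two suprema of the
discriminant condition. Then `3 ā(v, A) A ≤ 9 C₁ C₂ b(v)`, which falls short of `2 b(v)` by at
least `(2 - 9 C₁ C₂) λ`, uniformly in `v`. Since `H'''` is uniformly continuous on a compact ball,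
`ā(v, A + ε) - ā(v, A)` is small uniformly in `v`, so the inequality survives at some `η₃ = A + ε`.
-/

open Set

section RatioSupremum

variable {ι : Type*} {P : ι → Prop} {f g : ι → ℝ}

theorem le_sSup_div_mul {lam B : ℝ} (hlam : 0 < lam) (hg : ∀ j, P j → lam ≤ g j)
    (hf : ∀ j, P j → 0 ≤ f j) (hfB : ∀ j, P j → f j ≤ B) {i : ι} (hi : P i) :
    f i ≤ sSup {x | ∃ j, P j ∧ x = f j / g j} * g i := by
  refine (div_le_iff₀ (hlam.trans_le (hg i hi))).1 (le_csSup ⟨B / lam, ?_⟩ ⟨i, hi, rfl⟩)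
  rintro _ ⟨j, hj, rfl⟩
  exact div_le_div₀ ((hf j hj).trans (hfB j hj)) (hfB j hj) hlam (hg j hj)

theorem sSup_div_nonneg (hf : ∀ i, P i → 0 ≤ f i) (hg : ∀ i, P i → 0 ≤ g i) :
    0 ≤ sSup {x | ∃ j, P j ∧ x = f j / g j} :=
  Real.sSup_nonneg (by rintro _ ⟨j, hj, rfl⟩; exact div_nonneg (hf j hj) (hg j hj))

theorem sSup_mul_div {a : ℝ} (ha : 0 ≤ a) :
    sSup {x | ∃ j, P j ∧ x = a * f j / g j} = a * sSup {x | ∃ j, P j ∧ x = f j / g j} := by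
  rw [← smul_eq_mul, ← Real.sSup_smul_of_nonneg ha]
  congr 1
  ext x
  simp [Set.mem_smul_set, mul_div_assoc, eq_comm]

end RatioSupremum

section DirectionalDerivatives

variable {E : Type*} [NormedAddCommGroup E] [NormedSpace ℝ E] {H : E → ℝ}

theorem iteratedDeriv_line (k : ℕ) (q v : E) (s : ℝ) :
    iteratedDeriv k (fun t : ℝ => H (q + t • v)) s = dirDeriv H k (q + s • v) v := by
  have h := congrFun (iteratedDeriv_comp_const_add k (fun t : ℝ => H (q + t • v)) s) 0
  simp only [add_zero] at h
  rw [← h, dirDeriv]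
  simp only [add_smul, add_assoc]

theorem dirDeriv_eq_iteratedFDeriv {n : WithTop ℕ∞} {k : ℕ} (hH : ContDiff ℝ n H)
    (hk : k ≤ n) (q v : E) : dirDeriv H k q v = iteratedFDeriv ℝ k H q (fun _ => v) := by
  let L : ℝ →L[ℝ] E := (1 : ℝ →L[ℝ] ℝ).smulRight v
  have hline : (fun t : ℝ => H (q + t • v)) = (fun y => H (q + y)) ∘ L := rfl
  rw [dirDeriv, hline, iteratedDeriv_eq_iteratedFDeriv,
    L.iteratedFDeriv_comp_right (f := fun y => H (q + y))
      (hH.comp (contDiff_const.add contDiff_id)) 0 hk]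
  simp [L, iteratedFDeriv_comp_add_left]

theorem abs_apply_const_le_opNorm {k : ℕ}
    (T : ContinuousMultilinearMap ℝ (fun _ : Fin k => E) ℝ) {v : E} (hv : ‖v‖ = 1) :
    |T (fun _ => v)| ≤ ‖T‖ := by
  simpa [hv] using T.le_opNorm (fun _ => v)

theorem abs_dirDeriv_le {n : WithTop ℕ∞} {k : ℕ} (hH : ContDiff ℝ n H) (hk : k ≤ n) (q : E)
    {v : E} (hv : ‖v‖ = 1) : |dirDeriv H k q v| ≤ ‖iteratedFDeriv ℝ k H q‖ := by
  rw [dirDeriv_eq_iteratedFDeriv hH hk]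
  exact abs_apply_const_le_opNorm _ hv

theorem exists_taylor_two_line (hH : ContDiff ℝ 3 H) (p v : E) {r : ℝ} (hr : 0 < r) :
    ∃ s ∈ Ioo 0 r, H (p + r • v) = H p + dirDeriv H 1 p v * r + dirDeriv H 2 p v / 2 * r ^ 2
      + dirDeriv H 3 (p + s • v) v / 6 * r ^ 3 := by
  set φ : ℝ → ℝ := fun t => H (p + t • v)
  have hφ : ContDiff ℝ 3 φ := hH.comp (contDiff_const.add (contDiff_id.smul contDiff_const))
  obtain ⟨s, hs, hTaylor⟩ :=
    taylor_mean_remainder_lagrange_iteratedDeriv (n := 2) hr.ne hφ.contDiffOn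
  rw [uIoo_of_le hr.le] at hs
  have hderiv0 (k : ℕ) (hk : k ≤ 3) : iteratedDerivWithin k φ (uIcc 0 r) 0 = dirDeriv H k p v :=
    iteratedDerivWithin_eq_iteratedDeriv (uniqueDiffOn_uIcc hr.ne)
      (hφ.contDiffAt.of_le (by exact_mod_cast hk)) left_mem_uIcc
  have hderiv00 : dirDeriv H 0 p v = H p := by simp [dirDeriv]
  simp only [taylor_within_apply, Finset.sum_range_succ, Finset.sum_range_zero,
    hderiv0 0 (by norm_num), hderiv0 1 (by norm_num), hderiv0 2 (by norm_num), hderiv00,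
    iteratedDeriv_line, φ] at hTaylor
  norm_num [Nat.factorial] at hTaylor
  exact ⟨s, hs, by linarith⟩

variable (H) in
theorem thirdDerivMax_nonneg (p v : E) (r : ℝ) : 0 ≤ thirdDerivMax H p v r :=
  Real.sSup_nonneg <| by rintro _ ⟨s, -, rfl⟩; positivity

theorem thirdDerivMax_le {p v : E} {r X : ℝ}
    (h : ∀ s ∈ Icc (-r) r, 1 / 6 * |dirDeriv H 3 (p + s • v) v| ≤ X) (hX : 0 ≤ X) :
    thirdDerivMax H p v r ≤ X :=
  Real.sSup_le (by rintro _ ⟨s, hs, rfl⟩; exact h s hs) hX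

theorem le_thirdDerivMax (hH : ContDiff ℝ 3 H) (p v : E) {r s : ℝ} (hs : s ∈ Icc (-r) r) :
    1 / 6 * |dirDeriv H 3 (p + s • v) v| ≤ thirdDerivMax H p v r := by
  have hφ : ContDiff ℝ 3 fun t : ℝ => H (p + t • v) :=
    hH.comp (contDiff_const.add (contDiff_id.smul contDiff_const))
  have hcont : Continuous fun s : ℝ => 1 / 6 * |dirDeriv H 3 (p + s • v) v| := by
    simp only [← iteratedDeriv_line]
    exact continuous_const.mul (hφ.continuous_iteratedDeriv 3 le_rfl).abs
  exact le_csSup (isCompact_Icc.bddAbove_image hcont.continuousOn) (mem_image_of_mem _ hs)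

theorem taylor_sub_thirdDerivMax_le (hH : ContDiff ℝ 3 H) (p v : E) {r R : ℝ} (hr : 0 < r)
    (hrR : r ≤ R) :
    dirDeriv H 1 p v * r + dirDeriv H 2 p v / 2 * r ^ 2 - thirdDerivMax H p v R * r ^ 3
      ≤ H (p + r • v) - H p := by
  obtain ⟨s, hs, hTaylor⟩ := exists_taylor_two_line hH p v hr
  have hrem := le_thirdDerivMax hH p v (r := R) (s := s) ⟨by linarith [hs.1], by linarith [hs.2]⟩
  have hlow : -(thirdDerivMax H p v R * r ^ 3) ≤ dirDeriv H 3 (p + s • v) v / 6 * r ^ 3 := by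
    have := neg_abs_le (dirDeriv H 3 (p + s • v) v)
    nlinarith [pow_pos hr 3]
  linarith

theorem energy_barrier_along_ray (hH : ContDiff ℝ 3 H) (p v : E) {lam η₁ η₃ r : ℝ}
    (hlam : 2 * lam ≤ dirDeriv H 2 p v) (hc : 4 * |dirDeriv H 1 p v| ≤ η₁ * dirDeriv H 2 p v)
    (hbar : 3 * thirdDerivMax H p v η₃ * η₃ ≤ dirDeriv H 2 p v)
    (hr : 0 < r) (hrη₁ : 3 / 2 * η₁ < r) (hrη₃ : r ≤ η₃) :
    lam / 3 * r ^ 2 * (1 - 3 / 2 * η₁ / r) ≤ H (p + r • v) - H p := by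
  have htaylor := taylor_sub_thirdDerivMax_le hH p v hr hrη₃
  have hā := thirdDerivMax_nonneg H p v η₃
  set a := thirdDerivMax H p v η₃
  set c := dirDeriv H 1 p v
  set d := dirDeriv H 2 p v
  have hcubic : a * r ^ 3 ≤ d / 3 * r ^ 2 := by
    have : a * r * r ^ 2 ≤ a * η₃ * r ^ 2 := by gcongr
    nlinarith [sq_nonneg r]
  have hlinear : -(η₁ * d / 4 * r) ≤ c * r := by nlinarith [neg_abs_le c]
  have hgap : 0 ≤ r ^ 2 / 3 - η₁ * r / 2 := by nlinarith
  have hfactor : lam / 3 * r ^ 2 * (1 - 3 / 2 * η₁ / r) = lam * (r ^ 2 / 3 - η₁ * r / 2) := by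
    field_simp
  nlinarith

theorem energy_barrier (hH : ContDiff ℝ 3 H) {p q : E} {b c : E → ℝ}
    (hb : ∀ v, b v = 1 / 2 * dirDeriv H 2 p v) (hc : ∀ v, c v = dirDeriv H 1 p v)
    {lam η₁ η₃ : ℝ} (hlam : 0 < lam) (hb_ge : ∀ v : E, ‖v‖ = 1 → lam ≤ b v)
    (hcη : ∀ v : E, ‖v‖ = 1 → 2 * |c v| ≤ η₁ * b v)
    (hbar : ∀ v : E, ‖v‖ = 1 → 3 * thirdDerivMax H p v η₃ * η₃ ≤ 2 * b v) (hη₁ : 0 ≤ η₁)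
    (hqη₁ : 3 / 2 * η₁ < ‖q - p‖) (hqη₃ : ‖q - p‖ ≤ η₃) :
    lam / 3 * ‖q - p‖ ^ 2 * (1 - 3 / 2 * η₁ / ‖q - p‖) ≤ H q - H p ∧
      0 < lam / 3 * ‖q - p‖ ^ 2 * (1 - 3 / 2 * η₁ / ‖q - p‖) := by
  have hr : 0 < ‖q - p‖ := by linarith
  set v := ‖q - p‖⁻¹ • (q - p)
  have hv : ‖v‖ = 1 := norm_smul_inv_norm (norm_pos_iff.1 hr)
  have hq : p + ‖q - p‖ • v = q := by rw [smul_inv_smul₀ hr.ne', add_sub_cancel]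
  have hslope : 4 * |dirDeriv H 1 p v| ≤ η₁ * dirDeriv H 2 p v := by
    have := hcη v hv
    rw [hc, hb] at this
    linarith
  have hbarrier := energy_barrier_along_ray hH p v (lam := lam) (by linarith [hb_ge v hv, hb v])
    hslope
    (by linarith [hbar v hv, hb v]) hr hqη₁ hqη₃
  rw [hq] at hbarrier
  exact ⟨hbarrier, mul_pos (by positivity) (sub_pos.2 ((div_lt_one hr).2 hqη₁))⟩

theorem mem_closedBall_line (p : E) {v : E} (hv : ‖v‖ = 1) {s R : ℝ} (hs : s ∈ Icc (-R) R) :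
    p + s • v ∈ Metric.closedBall p R := by
  rw [Metric.mem_closedBall, dist_eq_norm, add_sub_cancel_left, norm_smul, hv, mul_one,
    Real.norm_eq_abs, abs_le]
  exact hs

theorem thirdDerivMax_mono (hH : ContDiff ℝ 3 H) (p v : E) {r r' : ℝ} (hr : r ≤ r') :
    thirdDerivMax H p v r ≤ thirdDerivMax H p v r' :=
  thirdDerivMax_le (fun s hs => le_thirdDerivMax hH p v ⟨by linarith [hs.1], by linarith [hs.2]⟩)
    (thirdDerivMax_nonneg H p v r')

variable [ProperSpace E]

theorem exists_thirdDerivMax_le (hH : ContDiff ℝ 3 H) (p : E) (R : ℝ) :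
    ∃ M, ∀ v : E, ‖v‖ = 1 → thirdDerivMax H p v R ≤ M := by
  obtain ⟨C, hC⟩ := (isCompact_closedBall p R).exists_bound_of_continuousOn
    (hH.continuous_iteratedFDeriv le_rfl).continuousOn
  refine ⟨max C 0 / 6, fun v hv => thirdDerivMax_le (fun s hs => ?_) (by positivity)⟩
  linarith [abs_dirDeriv_le hH le_rfl (p + s • v) hv, hC _ (mem_closedBall_line p hv hs),
    le_max_left C 0]

theorem exists_thirdDerivMax_add_le (hH : ContDiff ℝ 3 H) (p : E) {A δ : ℝ} (hA : 0 ≤ A)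
    (hδ : 0 < δ) : ∃ ε > 0, ∀ v : E, ‖v‖ = 1 →
      thirdDerivMax H p v (A + ε) ≤ thirdDerivMax H p v A + δ := by
  obtain ⟨ε₀, hε₀, hUC⟩ := Metric.uniformContinuousOn_iff.1
    ((isCompact_closedBall p (A + 1)).uniformContinuousOn_of_continuous
      (hH.continuous_iteratedFDeriv le_rfl).continuousOn) (6 * δ) (by positivity)
  set ε := min 1 (ε₀ / 2)
  have hε : 0 < ε := lt_min one_pos (half_pos hε₀)
  have hε₁ : ε ≤ 1 := min_le_left _ _
  have hεε₀ : ε < ε₀ := (min_le_right _ _).trans_lt (half_lt_self hε₀)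
  refine ⟨ε, hε, fun v hv => thirdDerivMax_le (fun s hs => ?_)
    (by linarith [thirdDerivMax_nonneg H p v A])⟩
  obtain ⟨s', hs', hss'⟩ : ∃ s' ∈ Icc (-A) A, |s - s'| < ε₀ := by
    refine ⟨max (-A) (min A s), ⟨le_max_left _ _, max_le (by linarith) (min_le_left _ _)⟩,
      (abs_le.2 ⟨?_, ?_⟩).trans_lt hεε₀⟩ <;>
      rcases max_cases (-A) (min A s) with h | h <;>
      rcases min_cases A s with h' | h' <;> linarith [hs.1, hs.2]
  have hball (t : ℝ) (ht : t ∈ Icc (-(A + ε)) (A + ε)) : p + t • v ∈ Metric.closedBall p (A + 1) :=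
    mem_closedBall_line p hv ⟨by linarith [ht.1], by linarith [ht.2]⟩
  have hclose := hUC _ (hball s hs) _ (hball s' ⟨by linarith [hs'.1], by linarith [hs'.2]⟩)
    (by rwa [dist_eq_norm, add_sub_add_left_eq_sub, ← sub_smul, norm_smul, hv, mul_one])
  rw [dist_eq_norm] at hclose
  have hdiff := abs_apply_const_le_opNorm (iteratedFDeriv ℝ 3 H (p + s • v) -
    iteratedFDeriv ℝ 3 H (p + s' • v)) hv
  have hs'max := le_thirdDerivMax hH p v hs'
  rw [dirDeriv_eq_iteratedFDeriv hH le_rfl] at hs'max ⊢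
  rw [sub_apply] at hdiff
  linarith [abs_sub_abs_le_abs_sub (iteratedFDeriv ℝ 3 H (p + s • v) (fun _ => v))
    (iteratedFDeriv ℝ 3 H (p + s' • v) (fun _ => v))]

theorem exists_gt_three_mul_thirdDerivMax_mul_le (hH : ContDiff ℝ 3 H) (p : E) {f : E → ℝ}
    {A κ : ℝ} (hA : 0 ≤ A) (hκ : 0 < κ)
    (hslack : ∀ v : E, ‖v‖ = 1 → 3 * thirdDerivMax H p v A * A + κ ≤ f v) :
    ∃ η, A < η ∧ ∀ v : E, ‖v‖ = 1 → 3 * thirdDerivMax H p v η * η ≤ f v := by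
  obtain ⟨M, hM⟩ := exists_thirdDerivMax_le hH p A
  -- growth of `ā` and growth of the radius each use up at most half of the slack `κ`
  obtain ⟨ε, hε, hstep⟩ := exists_thirdDerivMax_add_le hH p hA
    (δ := κ / (6 * (A + 1))) (by positivity)
  set ε' := min 1 (min ε (κ / (6 * (|M| + 1))))
  have hε' : 0 < ε' := lt_min one_pos (lt_min hε (by positivity))
  have hε'₁ : ε' ≤ 1 := min_le_left _ _
  have hε'ε : ε' ≤ ε := (min_le_right _ _).trans (min_le_left _ _)
  have hε'M : 3 * |M| * ε' ≤ κ / 2 := by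
    have : ε' * (6 * (|M| + 1)) ≤ κ :=
      (le_div_iff₀ (by positivity)).1 ((min_le_right _ _).trans (min_le_right _ _))
    nlinarith [abs_nonneg M]
  refine ⟨A + ε', by linarith, fun v hv => ?_⟩
  have hgrow : thirdDerivMax H p v (A + ε') ≤ thirdDerivMax H p v A + κ / (6 * (A + 1)) :=
    (thirdDerivMax_mono hH p v (by linarith)).trans (hstep v hv)
  have hδ : κ / (6 * (A + 1)) * 3 * (A + ε') ≤ κ / 2 := by
    rw [div_mul_eq_mul_div, div_mul_eq_mul_div, div_le_iff₀ (by positivity)]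
    nlinarith
  have ha := thirdDerivMax_nonneg H p v A
  have haM : thirdDerivMax H p v A ≤ |M| := (hM v hv).trans (le_abs_self M)
  nlinarith [hslack v hv, mul_le_mul_of_nonneg_right hgrow (by linarith : 0 ≤ 3 * (A + ε'))]

end DirectionalDerivatives

theorem energy_barrier_near_almost_critical_general (n : ℕ)
    (H : EuclideanSpace ℝ (Fin n) → ℝ) (hH : ContDiff ℝ 3 H)
    (p : EuclideanSpace ℝ (Fin n)) (lam : ℝ) (hlam : 0 < lam)
    (b c : EuclideanSpace ℝ (Fin n) → ℝ)
    (hb : ∀ v, b v = (1 / 2) * dirDeriv H 2 p v)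
    (hc : ∀ v, c v = dirDeriv H 1 p v)
    (hHess : ∀ v : EuclideanSpace ℝ (Fin n), ‖v‖ = 1 → 2 * lam ≤ dirDeriv H 2 p v)
    (η₁ : ℝ)
    (hη₁ : η₁ = sSup {x : ℝ | ∃ v : EuclideanSpace ℝ (Fin n), ‖v‖ = 1 ∧
      x = 2 * |c v| / b v}) :
    (∀ η₃ : ℝ, (3 / 2) * η₁ < η₃ →
      (∀ v : EuclideanSpace ℝ (Fin n), ‖v‖ = 1 →
        3 * thirdDerivMax H p v η₃ * η₃ ≤ 2 * b v) →
      ∀ q : EuclideanSpace ℝ (Fin n), (3 / 2) * η₁ < ‖q - p‖ → ‖q - p‖ ≤ η₃ →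
        (lam / 3) * ‖q - p‖ ^ 2 * (1 - (3 / 2) * η₁ / ‖q - p‖) ≤ H q - H p ∧
        0 < (lam / 3) * ‖q - p‖ ^ 2 * (1 - (3 / 2) * η₁ / ‖q - p‖)) ∧
    ((sSup {x : ℝ | ∃ v : EuclideanSpace ℝ (Fin n), ‖v‖ = 1 ∧ x = |c v| / b v}) *
      (sSup {x : ℝ | ∃ v : EuclideanSpace ℝ (Fin n), ‖v‖ = 1 ∧
        x = thirdDerivMax H p v ((3 / 2) * η₁) / b v}) < 2 / 9 →
      ∃ η₃ : ℝ, (3 / 2) * η₁ < η₃ ∧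
        ∀ v : EuclideanSpace ℝ (Fin n), ‖v‖ = 1 →
          3 * thirdDerivMax H p v η₃ * η₃ ≤ 2 * b v) := by
  set C₁ := sSup {x : ℝ | ∃ v : EuclideanSpace ℝ (Fin n), ‖v‖ = 1 ∧ x = |c v| / b v}
  have hb_ge (v) (hv : ‖v‖ = 1) : lam ≤ b v := by linarith [hb v, hHess v hv]
  have hb_nonneg (v) (hv : ‖v‖ = 1) : 0 ≤ b v := hlam.le.trans (hb_ge v hv)
  have hη₁C₁ : η₁ = 2 * C₁ := hη₁.trans (sSup_mul_div zero_le_two)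
  have hC₁ : 0 ≤ C₁ := sSup_div_nonneg (fun _ _ => abs_nonneg _) hb_nonneg
  have hc_le (v) (hv : ‖v‖ = 1) : |c v| ≤ C₁ * b v :=
    le_sSup_div_mul hlam hb_ge (fun _ _ => abs_nonneg _)
      (fun w hw => hc w ▸ abs_dirDeriv_le hH (by norm_num) p hw) hv
  refine ⟨fun η₃ _ hbar q hqη₁ hqη₃ => energy_barrier hH hb hc hlam hb_ge
    (fun v hv => by rw [hη₁C₁]; linarith [hc_le v hv]) hbar (by rw [hη₁C₁]; positivity) hqη₁ hqη₃,
    fun hdisc => ?_⟩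
  set A := 3 / 2 * η₁ with hA_def
  have hA : A = 3 * C₁ := by rw [hA_def, hη₁C₁]; ring
  obtain ⟨M, hM⟩ := exists_thirdDerivMax_le hH p A
  set C₂ := sSup {x : ℝ | ∃ v : EuclideanSpace ℝ (Fin n), ‖v‖ = 1 ∧
    x = thirdDerivMax H p v A / b v}
  have hā_le (v) (hv : ‖v‖ = 1) : thirdDerivMax H p v A ≤ C₂ * b v :=
    le_sSup_div_mul hlam hb_ge (fun w _ => thirdDerivMax_nonneg H p w A) hM hv
  have hC₂ : 0 ≤ C₂ := sSup_div_nonneg (fun v _ => thirdDerivMax_nonneg H p v A) hb_nonneg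
  have hA_nonneg : 0 ≤ A := by rw [hA]; positivity
  refine exists_gt_three_mul_thirdDerivMax_mul_le hH p hA_nonneg
    (κ := (2 - 9 * (C₁ * C₂)) * lam) (by nlinarith) fun v hv => ?_
  have hcubic := mul_le_mul_of_nonneg_right (hā_le v hv) hA_nonneg
  have hslack := mul_le_mul_of_nonneg_left (hb_ge v hv) (by nlinarith : 0 ≤ 2 - 9 * (C₁ * C₂))
  linear_combination 3 * hcubic + hslack + 3 * C₂ * b v * hA

/-- **Proposition 3 (Energy barrier near an almost-critical point).** Let `H` be `C³`, with
`H''|_p(v) ≥ 2λ > 0` for all unit `v`, `b(v) = (1/2)H''|_p(v)`, `c(v) = H'|_p(v)`,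
`ā(v,r) = max_{|s|≤r}(1/6)|H'''|_{p+sv}(v)|`, and `η₁* = max_{|v|=1} 2|c(v)|/b(v)`.
If `η₃ > (3/2)η₁*` satisfies `3ā(v,η₃)η₃ ≤ 2b(v)` for all unit `v`, then
`H(q) − H(p) ≥ (λ/3)|q−p|²(1 − (3/2)η₁*/|q−p|) > 0` for `(3/2)η₁* < |q−p| ≤ η₃`; moreover
under the strong discriminant condition with constant `2/9` such an `η₃` exists. -/
theorem energy_barrier_near_almost_critical (n : ℕ) (hn : 0 < n)
    (H : EuclideanSpace ℝ (Fin n) → ℝ) (hH : ContDiff ℝ 3 H)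
    (p : EuclideanSpace ℝ (Fin n)) (lam : ℝ) (hlam : 0 < lam)
    (b c : EuclideanSpace ℝ (Fin n) → ℝ)
    (hb : ∀ v, b v = (1 / 2) * dirDeriv H 2 p v)
    (hc : ∀ v, c v = dirDeriv H 1 p v)
    (hHess : ∀ v : EuclideanSpace ℝ (Fin n), ‖v‖ = 1 → 2 * lam ≤ dirDeriv H 2 p v)
    (η₁ : ℝ)
    (hη₁ : η₁ = sSup {x : ℝ | ∃ v : EuclideanSpace ℝ (Fin n), ‖v‖ = 1 ∧
      x = 2 * |c v| / b v}) :
    (∀ η₃ : ℝ, (3 / 2) * η₁ < η₃ →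
      (∀ v : EuclideanSpace ℝ (Fin n), ‖v‖ = 1 →
        3 * thirdDerivMax H p v η₃ * η₃ ≤ 2 * b v) →
      ∀ q : EuclideanSpace ℝ (Fin n), (3 / 2) * η₁ < ‖q - p‖ → ‖q - p‖ ≤ η₃ →
        (lam / 3) * ‖q - p‖ ^ 2 * (1 - (3 / 2) * η₁ / ‖q - p‖) ≤ H q - H p ∧
        0 < (lam / 3) * ‖q - p‖ ^ 2 * (1 - (3 / 2) * η₁ / ‖q - p‖)) ∧
    ((sSup {x : ℝ | ∃ v : EuclideanSpace ℝ (Fin n), ‖v‖ = 1 ∧ x = |c v| / b v}) *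
      (sSup {x : ℝ | ∃ v : EuclideanSpace ℝ (Fin n), ‖v‖ = 1 ∧
        x = thirdDerivMax H p v ((3 / 2) * η₁) / b v}) < 2 / 9 →
      ∃ η₃ : ℝ, (3 / 2) * η₁ < η₃ ∧
        ∀ v : EuclideanSpace ℝ (Fin n), ‖v‖ = 1 →
          3 * thirdDerivMax H p v η₃ * η₃ ≤ 2 * b v) :=
  energy_barrier_near_almost_critical_general n H hH p lam hlam b c hb hc hHess η₁ hη₁
end
end

section
/- (Explicit energy barrier for a cubic energy, Proposition III′.) Assume the cubic setting and suppose η₁ < (8/9)η₀. Then (3/2)η₁ < (4/3)η₀, and every q ∈ ℝⁿ with (3/2)η₁ < |q − p| ≤ (4/3)η₀ satisfies H(q) − H(p) ≥ (λ/3)|q − p|²(1 − (3/2)η₁/|q − p|) > 0. -/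
/-!
Along the ray `p + r • v` with `‖v‖ = 1` the energy is the cubic polynomial
`r³ a + r² b + r c` in `r`. For `r ≤ (4/3) η₀` the cubic term costs at most two thirds of the
quadratic one, and the linear term at most `(η₁/2) r b`; what is left is
`(b/3) (r² - (3/2) η₁ r) ≥ (λ/3) (r² - (3/2) η₁ r)`.
-/

lemma cubic_form_smul {R M : Type*} [CommRing R] [AddCommGroup M] [Module R M]
    (T : M →ₗ[R] M →ₗ[R] M →ₗ[R] R) (B : M →ₗ[R] M →ₗ[R] R) (C : M →ₗ[R] R) (r : R) (v : M) :
    T (r • v) (r • v) (r • v) + B (r • v) (r • v) + C (r • v) =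
      r ^ 3 * T v v v + r ^ 2 * B v v + r * C v := by
  simp only [map_smul, LinearMap.smul_apply, smul_eq_mul]
  ring

lemma exists_norm_eq_one_smul {E : Type*} [NormedAddCommGroup E] [NormedSpace ℝ E] {x : E}
    (hx : x ≠ 0) : ∃ v : E, ‖v‖ = 1 ∧ x = ‖x‖ • v :=
  ⟨‖x‖⁻¹ • x, norm_smul_inv_norm hx, (smul_inv_smul₀ (norm_ne_zero_iff.mpr hx) x).symm⟩

lemma cubic_coeff_lower_bound {r a b c lam η₀ η₁ : ℝ} (hr : 0 ≤ r)
    (hrη₀ : r ≤ 4 / 3 * η₀) (hrη₁ : 3 / 2 * η₁ ≤ r) (hb : lam ≤ b)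
    (ha : 2 * |a| * η₀ ≤ b) (hc : 2 * |c| ≤ η₁ * b) :
    lam / 3 * (r ^ 2 - 3 / 2 * η₁ * r) ≤ r ^ 3 * a + r ^ 2 * b + r * c := by
  have hcubic : -(2 / 3 * r ^ 2 * b) ≤ r ^ 3 * a := by
    have hra : r * |a| ≤ 2 / 3 * b := by
      nlinarith [mul_le_mul_of_nonneg_right hrη₀ (abs_nonneg a)]
    nlinarith [mul_le_mul_of_nonneg_left hra (sq_nonneg r),
      mul_le_mul_of_nonneg_left (neg_abs_le a) (pow_nonneg hr 3)]
  have hlinear : -(η₁ / 2 * r * b) ≤ r * c := by nlinarith [neg_abs_le c]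
  calc lam / 3 * (r ^ 2 - 3 / 2 * η₁ * r)
      ≤ b / 3 * (r ^ 2 - 3 / 2 * η₁ * r) :=
        mul_le_mul_of_nonneg_right (by linarith) (by nlinarith)
    _ = r ^ 2 * b - 2 / 3 * r ^ 2 * b - η₁ / 2 * r * b := by ring
    _ ≤ r ^ 3 * a + r ^ 2 * b + r * c := by linarith

theorem cubic_energy_barrier_general (n : ℕ) (p : EuclideanSpace ℝ (Fin n))
    (H : EuclideanSpace ℝ (Fin n) → ℝ)
    (T : EuclideanSpace ℝ (Fin n) →ₗ[ℝ] EuclideanSpace ℝ (Fin n) →ₗ[ℝ]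
      EuclideanSpace ℝ (Fin n) →ₗ[ℝ] ℝ)
    (B : EuclideanSpace ℝ (Fin n) →ₗ[ℝ] EuclideanSpace ℝ (Fin n) →ₗ[ℝ] ℝ)
    (C : EuclideanSpace ℝ (Fin n) →ₗ[ℝ] ℝ)
    (hH : ∀ x, H (p + x) = H p + T x x x + B x x + C x)
    (lam : ℝ) (hlam : 0 < lam)
    (hbv : ∀ v : EuclideanSpace ℝ (Fin n), ‖v‖ = 1 → lam ≤ B v v)
    (η₀ η₁ : ℝ) (hη₁ : 0 ≤ η₁)
    (hcv : ∀ v : EuclideanSpace ℝ (Fin n), ‖v‖ = 1 → 2 * |C v| ≤ η₁ * B v v)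
    (hav : ∀ v : EuclideanSpace ℝ (Fin n), ‖v‖ = 1 → 2 * |T v v v| * η₀ ≤ B v v)
    (hlt : η₁ < (8 / 9) * η₀) :
    (3 / 2) * η₁ < (4 / 3) * η₀ ∧
    ∀ q : EuclideanSpace ℝ (Fin n),
      (3 / 2) * η₁ < ‖q - p‖ → ‖q - p‖ ≤ (4 / 3) * η₀ →
      (lam / 3) * ‖q - p‖ ^ 2 * (1 - (3 / 2) * η₁ / ‖q - p‖) ≤ H q - H p ∧
      0 < (lam / 3) * ‖q - p‖ ^ 2 * (1 - (3 / 2) * η₁ / ‖q - p‖) := by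
  refine ⟨by linarith, fun q hfar hnear => ?_⟩
  have hr : 0 < ‖q - p‖ := by linarith
  obtain ⟨v, hv, hqp⟩ := exists_norm_eq_one_smul (norm_pos_iff.mp hr)
  have hray : H q - H p = ‖q - p‖ ^ 3 * T v v v + ‖q - p‖ ^ 2 * B v v + ‖q - p‖ * C v := by
    rw [← cubic_form_smul, ← hqp, ← add_sub_cancel p q, hH, add_sub_cancel_left]
    ring
  have hfactor : (lam / 3) * ‖q - p‖ ^ 2 * (1 - (3 / 2) * η₁ / ‖q - p‖) =
      lam / 3 * (‖q - p‖ ^ 2 - 3 / 2 * η₁ * ‖q - p‖) := by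
    field_simp
  have hgap : 0 < 1 - (3 / 2) * η₁ / ‖q - p‖ := by rwa [sub_pos, div_lt_one hr]
  refine ⟨?_, by positivity⟩
  rw [hray, hfactor]
  exact cubic_coeff_lower_bound hr.le hnear hfar.le (hbv v hv) (hav v hv) (hcv v hv)

/-- **Proposition III′ (Explicit energy barrier for a cubic energy).** Let
`H(p+x) = H(p) + T(x,x,x) + B(x,x) + C(x)` with `T` symmetric trilinear, `B` symmetric
bilinear, `C` linear; suppose `B(v,v) ≥ λ > 0`, `2|C(v)| ≤ η₁ B(v,v)` and
`2|T(v,v,v)| η₀ ≤ B(v,v)` for all unit `v`, with `η₀ > 0`, `η₁ ≥ 0`. If `η₁ < (8/9)η₀`,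
then `(3/2)η₁ < (4/3)η₀`, and `H(q) − H(p) ≥ (λ/3)|q−p|²(1 − (3/2)η₁/|q−p|) > 0` whenever
`(3/2)η₁ < |q−p| ≤ (4/3)η₀`. -/
theorem cubic_energy_barrier (n : ℕ) (p : EuclideanSpace ℝ (Fin n))
    (H : EuclideanSpace ℝ (Fin n) → ℝ)
    (T : EuclideanSpace ℝ (Fin n) →ₗ[ℝ] EuclideanSpace ℝ (Fin n) →ₗ[ℝ]
      EuclideanSpace ℝ (Fin n) →ₗ[ℝ] ℝ)
    (B : EuclideanSpace ℝ (Fin n) →ₗ[ℝ] EuclideanSpace ℝ (Fin n) →ₗ[ℝ] ℝ)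
    (C : EuclideanSpace ℝ (Fin n) →ₗ[ℝ] ℝ)
    (hT : ∀ x y z, T x y z = T y x z ∧ T x y z = T x z y)
    (hB : ∀ x y, B x y = B y x)
    (hH : ∀ x, H (p + x) = H p + T x x x + B x x + C x)
    (lam : ℝ) (hlam : 0 < lam)
    (hbv : ∀ v : EuclideanSpace ℝ (Fin n), ‖v‖ = 1 → lam ≤ B v v)
    (η₀ η₁ : ℝ) (hη₀ : 0 < η₀) (hη₁ : 0 ≤ η₁)
    (hcv : ∀ v : EuclideanSpace ℝ (Fin n), ‖v‖ = 1 → 2 * |C v| ≤ η₁ * B v v)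
    (hav : ∀ v : EuclideanSpace ℝ (Fin n), ‖v‖ = 1 → 2 * |T v v v| * η₀ ≤ B v v)
    (hlt : η₁ < (8 / 9) * η₀) :
    (3 / 2) * η₁ < (4 / 3) * η₀ ∧
    ∀ q : EuclideanSpace ℝ (Fin n),
      (3 / 2) * η₁ < ‖q - p‖ → ‖q - p‖ ≤ (4 / 3) * η₀ →
      (lam / 3) * ‖q - p‖ ^ 2 * (1 - (3 / 2) * η₁ / ‖q - p‖) ≤ H q - H p ∧
      0 < (lam / 3) * ‖q - p‖ ^ 2 * (1 - (3 / 2) * η₁ / ‖q - p‖) :=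
  cubic_energy_barrier_general n p H T B C hH lam hlam hbv η₀ η₁ hη₁ hcv hav hlt
end
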